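/- Let A be a finite alphabet, u ∈ A^ℕ an infinite word, and φ: A* → A* a morphism in Class P_ret with marker w such that the last letters of the words φ(c), c ∈ A, are not all equal and the map ρ sending each letter c to the last letter of φ(c) is injective. Then for all letters a, b ∈ A and every finite word v ∈ A*: the word a v b is a factor of u if and only if the word ρ(a) φ(v) w ρ(b) is a factor of φ(u). -/

import Mathlib

open List

/-- Apply a morphism (given by its values on letters) to a finite word. -/
def applyM {A : Type*} (φ : A → List A) (v : List A) : List A := v.flatMap φ

/-- The set of occurrences of `w` as a factor of `u`:
indices `i` such that the block of `u` of length `|w|` starting at `i` equals `w`. -/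
def occs {A : Type*} [DecidableEq A] (w u : List A) : Finset ℕ :=
  (Finset.range (u.length + 1)).filter
    (fun i => i + w.length ≤ u.length ∧ (u.drop i).take w.length = w)

/-- A morphism `φ` belongs to Class `P_ret` with marker `w` if it is injective on
letters, `w` is a palindrome, and for each letter `a` the word `φ(a)w` is a palindrome
in which `w` occurs exactly twice, namely as a prefix (position `0`) and as a suffix
(position `|φ(a)|`, distinct from `0`). -/
def IsPretWithMarker {A : Type*} [DecidableEq A] (φ : A → List A) (w : List A) : Prop :=
  Function.Injective φ ∧ w.reverse = w ∧
    ∀ a : A, (φ a ++ w).reverse = φ a ++ w ∧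
      occs w (φ a ++ w) = {0, (φ a).length} ∧ (φ a).length ≠ 0

/-- The block of length `len` of the infinite word `u` starting at position `i`. -/
def factorAt {A : Type*} (u : ℕ → A) (i len : ℕ) : List A :=
  (List.range len).map fun k => u (i + k)

/-- `i` is an occurrence of the finite word `v` in the infinite word `u`. -/
def OccursAt {A : Type*} (u : ℕ → A) (v : List A) (i : ℕ) : Prop :=
  factorAt u i v.length = v

/-- `v` belongs to the language of the infinite word `u`, i.e. `v` is a factor of `u`. -/
def InLang {A : Type*} (u : ℕ → A) (v : List A) : Prop := ∃ i, OccursAt u v i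

/-- The image `φ(u) = φ(u₀)φ(u₁)φ(u₂)⋯` of an infinite word `u` under a
(non-erasing) morphism `φ`, as an infinite word. -/
def applyInf {A : Type*} (φ : A → List A) (u : ℕ → A) (n : ℕ) : A :=
  (((List.range (n + 1)).flatMap fun i => φ (u i))).getD n (u 0)

/-- The language of `u` is closed under reversal. -/
def ClosedUnderReversal {A : Type*} (u : ℕ → A) : Prop :=
  ∀ v : List A, InLang u v → InLang u v.reverse

/-- A finite word is rich if its number of palindromic factors (including `ε`)
equals its length plus one. -/
def RichWord {A : Type*} (u : List A) : Prop :=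
  {p : List A | p <:+: u ∧ p.reverse = p}.ncard = u.length + 1

/-- An infinite word is rich if all its finite prefixes are rich. -/
def RichInf {A : Type*} (u : ℕ → A) : Prop := ∀ n : ℕ, RichWord (factorAt u 0 n)

/-- An infinite word is recurrent if each of its factors occurs infinitely often. -/
def Recurrent {A : Type*} (u : ℕ → A) : Prop :=
  ∀ v : List A, InLang u v → ∀ N : ℕ, ∃ i, N ≤ i ∧ OccursAt u v i

/-- `r` is a return word to `w` in the infinite word `u`: `wr ∈ L(u)` and `w`
occurs in `wr` exactly twice, as a prefix and as a suffix. -/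
def IsReturnWord {A : Type*} [DecidableEq A] (u : ℕ → A) (w r : List A) : Prop :=
  r ≠ [] ∧ InLang u (w ++ r) ∧ occs w (w ++ r) = {0, r.length}

/-- Left extensions of `x` in the language of `u`. -/
def leftExt {A : Type*} (u : ℕ → A) (x : List A) : Set A := {a | InLang u (a :: x)}

/-- Right extensions of `x` in the language of `u`. -/
def rightExt {A : Type*} (u : ℕ → A) (x : List A) : Set A := {b | InLang u (x ++ [b])}

/-- Bi-extensions of `x` in the language of `u`. -/
def biExt {A : Type*} (u : ℕ → A) (x : List A) : Set (A × A) :=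
  {p | InLang u (p.1 :: (x ++ [p.2]))}

/-- `x` is bispecial in `u`. -/
def Bispecial {A : Type*} (u : ℕ → A) (x : List A) : Prop :=
  2 ≤ (leftExt u x).ncard ∧ 2 ≤ (rightExt u x).ncard

/-- The bilateral order `b_u(x) = #B_u(x) − #L_u(x) − #R_u(x) + 1`. -/
noncomputable def bilateralOrder {A : Type*} (u : ℕ → A) (x : List A) : ℤ :=
  ((biExt u x).ncard : ℤ) - (leftExt u x).ncard - (rightExt u x).ncard + 1

/-- The number of palindromic extensions of `x` in `u`. -/
noncomputable def pext {A : Type*} (u : ℕ → A) (x : List A) : ℕ :=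
  {a | InLang u (a :: (x ++ [a]))}.ncard

/-- Arnoux-Rauzy morphisms: the monoid of morphisms generated by permutations of the
alphabet and by the elementary morphisms `ψ_a : a ↦ a, b ↦ ab` and `ψ̄_a : a ↦ a, b ↦ ba`. -/
inductive IsAR {A : Type*} [DecidableEq A] : (A → List A) → Prop
  | perm (π : Equiv.Perm A) : IsAR (fun a => [π a])
  | psiL (a : A) : IsAR (fun b => if b = a then [a] else [a, b])
  | psiR (a : A) : IsAR (fun b => if b = a then [a] else [b, a])
  | comp {φ ψ : A → List A} : IsAR φ → IsAR ψ → IsAR (fun a => applyM φ (ψ a))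

/-- The `k`-th power `φ^k` of a morphism. -/
def powM {A : Type*} (φ : A → List A) : ℕ → A → List A
  | 0, a => [a]
  | n + 1, a => applyM (powM φ n) (φ a)

/-- A morphism is primitive if some power of it maps every letter to a word
containing every letter. -/
def PrimitiveM {A : Type*} (φ : A → List A) : Prop :=
  ∃ k : ℕ, ∀ a b : A, b ∈ powM φ k a

/-- A (acyclic) morphism is marked: it has a rightmost conjugate `φR` whose
last-letter map is injective, and a leftmost conjugate `φL` whose first-letter map
is injective. -/
def Marked {A : Type*} (φ : A → List A) : Prop :=
  ∃ (φR φL : A → List A) (x y : List A),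
    (∀ a, φ a ++ x = x ++ φR a) ∧
    (∀ a, φL a ++ y = y ++ φ a) ∧
    (∃ a b : A, (φR a).getLast? ≠ (φR b).getLast?) ∧
    (∃ a b : A, (φL a).head? ≠ (φL b).head?) ∧
    Function.Injective (fun c => (φR c).getLast?) ∧
    Function.Injective (fun c => (φL c).head?)

/-!
Since `φ(c)w` is a palindrome and `w` is one, `φ(c)w = w·φ(c)ᴿ`; hence `φ(y)w = w·φ(yᴿ)ᴿ`
for every finite word `y`, and `φ(y)w` is a prefix of `φ(yz)w`. So the factors of `φ(u)` are
exactly the factors of the words `φ(u₀⋯u_{m-1})w`, and the theorem reduces to finite words `y`: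
`avb` is a factor of `y` iff `ρ(a)φ(v)wρ(b)` is a factor of `φ(y)w`.
Because `w` occurs in each `φ(c)w` only as a prefix and a suffix, every occurrence of `w` in
`φ(y)w` sits at a cut `φ(y₁) | φ(y₂)w` with `y = y₁y₂`. The letter after that `w` is the first
letter of `φ(c)ᴿ` for the first letter `c` of `y₂`, i.e. `ρ(c)`, and the injective last-letter
map `ρ` lets us read `y₁` backwards off `φ(y₁)`; this decodes `b` and `av` respectively.
-/

section InfiniteWord

variable {A : Type*} (s : ℕ → A)

@[simp]
theorem length_factorAt (i n : ℕ) : (factorAt s i n).length = n := by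
  simp [factorAt]

theorem factorAt_add (i m n : ℕ) :
    factorAt s i (m + n) = factorAt s i m ++ factorAt s (i + m) n := by
  simp [factorAt, List.range_add, Nat.add_assoc]

theorem factorAt_prefix_factorAt (i : ℕ) {m n : ℕ} (hmn : m ≤ n) :
    factorAt s i m <+: factorAt s i n := by
  obtain ⟨k, rfl⟩ := Nat.exists_eq_add_of_le hmn
  rw [factorAt_add]
  exact List.prefix_append _ _

theorem inLang_iff_exists_infix_factorAt (x : List A) :
    InLang s x ↔ ∃ n, x <:+: factorAt s 0 n := by
  constructor
  · rintro ⟨i, hi⟩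
    refine ⟨i + x.length, ?_⟩
    rw [factorAt_add, zero_add, hi]
    exact List.suffix_append _ _ |>.isInfix
  · rintro ⟨n, p, q, hpq⟩
    refine ⟨p.length, ?_⟩
    have hn : n = p.length + x.length + q.length := by
      simpa [Nat.add_assoc] using congrArg List.length hpq.symm
    rw [hn, factorAt_add, factorAt_add, zero_add] at hpq
    exact (List.append_inj (List.append_inj hpq (by simp)).1 (by simp)).2.symm

end InfiniteWord

section Morphism

variable {A : Type*} {φ : A → List A}

@[simp]
theorem applyM_nil : applyM φ [] = [] := rfl

@[simp]
theorem applyM_cons (c : A) (x : List A) : applyM φ (c :: x) = φ c ++ applyM φ x := rfl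

@[simp]
theorem applyM_append (x y : List A) : applyM φ (x ++ y) = applyM φ x ++ applyM φ y :=
  List.flatMap_append

theorem length_le_length_applyM (hφ : ∀ c, φ c ≠ []) (x : List A) :
    x.length ≤ (applyM φ x).length := by
  induction x with
  | nil => simp
  | cons c x ih =>
    have := List.length_pos_iff.mpr (hφ c)
    simp only [applyM_cons, List.length_append, List.length_cons]
    omega

theorem applyM_factorAt_prefix (u : ℕ → A) {m n : ℕ} (hmn : m ≤ n) :
    applyM φ (factorAt u 0 m) <+: applyM φ (factorAt u 0 n) := by
  obtain ⟨t, ht⟩ := factorAt_prefix_factorAt u 0 hmn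
  rw [← ht, applyM_append]
  exact List.prefix_append _ _

theorem applyInf_eq_getElem (hφ : ∀ c, φ c ≠ []) (u : ℕ → A) {m n : ℕ}
    (hn : n < (applyM φ (factorAt u 0 m)).length) :
    applyInf φ u n = (applyM φ (factorAt u 0 m))[n] := by
  have hdef : applyInf φ u n = (applyM φ (factorAt u 0 (n + 1))).getD n (u 0) := by
    simp [applyInf, applyM, factorAt, List.flatMap_map]
  have hn' : n < (applyM φ (factorAt u 0 (n + 1))).length := by
    simpa using length_le_length_applyM hφ (factorAt u 0 (n + 1))
  rw [hdef, List.getD_eq_getElem _ _ hn']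
  rcases le_total (n + 1) m with hle | hle
  · exact (applyM_factorAt_prefix u hle).getElem hn'
  · exact ((applyM_factorAt_prefix u hle).getElem hn).symm

theorem factorAt_applyInf (hφ : ∀ c, φ c ≠ []) (u : ℕ → A) (m : ℕ) :
    factorAt (applyInf φ u) 0 (applyM φ (factorAt u 0 m)).length =
      applyM φ (factorAt u 0 m) := by
  refine List.ext_getElem (by simp) fun n _ hn => ?_
  simpa [factorAt] using applyInf_eq_getElem hφ u hn

theorem inLang_applyInf_iff (hφ : ∀ c, φ c ≠ []) (u : ℕ → A) (x : List A) :
    InLang (applyInf φ u) x ↔ ∃ m, x <:+: applyM φ (factorAt u 0 m) := by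
  rw [inLang_iff_exists_infix_factorAt]
  constructor
  · rintro ⟨n, hx⟩
    refine ⟨n, hx.trans ?_⟩
    rw [← factorAt_applyInf hφ u n]
    refine (factorAt_prefix_factorAt _ 0 ?_).isInfix
    simpa using length_le_length_applyM hφ (factorAt u 0 n)
  · rintro ⟨m, hx⟩
    exact ⟨_, factorAt_applyInf hφ u m ▸ hx⟩

end Morphism

section LastLetter

variable {A : Type*} {φ : A → List A} {ρ : A → A}

theorem getLast?_applyM (hρ : ∀ c, (φ c).getLast? = some (ρ c)) (x : List A) :
    (applyM φ x).getLast? = x.getLast?.map ρ := by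
  induction x using List.reverseRecOn with
  | nil => simp
  | append_singleton x c _ => simp [List.getLast?_append, hρ]

theorem eq_concat_of_getLast?_applyM (hρ : ∀ c, (φ c).getLast? = some (ρ c))
    (hinj : Function.Injective ρ) {x : List A} {c : A}
    (hx : (applyM φ x).getLast? = some (ρ c)) : ∃ x', x = x' ++ [c] := by
  rw [getLast?_applyM hρ, Option.map_eq_some_iff] at hx
  obtain ⟨d, hd, hdc⟩ := hx
  rw [← hinj hdc]
  exact List.getLast?_eq_some_iff.mp hd

theorem eq_append_of_applyM_eq_append (hρ : ∀ c, (φ c).getLast? = some (ρ c))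
    (hinj : Function.Injective ρ) {x p v : List A} (hx : applyM φ x = p ++ applyM φ v) :
    ∃ y, x = y ++ v := by
  induction v using List.reverseRecOn generalizing x p with
  | nil => exact ⟨x, by simp⟩
  | append_singleton v c ih =>
    obtain ⟨x', rfl⟩ : ∃ x', x = x' ++ [c] :=
      eq_concat_of_getLast?_applyM hρ hinj (by simp [hx, List.getLast?_append, hρ])
    have hx' : applyM φ x' = p ++ applyM φ v :=
      List.append_cancel_right (by simpa using hx)
    obtain ⟨y, rfl⟩ := ih hx'
    exact ⟨y, by simp⟩

theorem eq_append_cons_of_applyM_eq (hρ : ∀ c, (φ c).getLast? = some (ρ c))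
    (hinj : Function.Injective ρ) {x p v : List A} {a : A}
    (hx : applyM φ x = p ++ ρ a :: applyM φ v) : ∃ y, x = y ++ a :: v := by
  obtain ⟨x', rfl⟩ := eq_append_of_applyM_eq_append hρ hinj (p := p ++ [ρ a]) (by simpa using hx)
  have hx' : applyM φ x' = p ++ [ρ a] := List.append_cancel_right (by simpa using hx)
  obtain ⟨y, rfl⟩ := eq_concat_of_getLast?_applyM (x := x') (c := a) hρ hinj (by simp [hx'])
  exact ⟨y, by simp⟩

end LastLetter

namespace IsPretWithMarker

variable {A : Type*} [DecidableEq A] {φ : A → List A} {w : List A}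

theorem ne_nil (h : IsPretWithMarker φ w) (c : A) : φ c ≠ [] :=
  List.ne_nil_of_length_pos (Nat.pos_of_ne_zero (h.2.2 c).2.2)

theorem append_marker (h : IsPretWithMarker φ w) (c : A) : φ c ++ w = w ++ (φ c).reverse := by
  conv_lhs => rw [← (h.2.2 c).1]
  rw [List.reverse_append, h.2.1]

theorem applyM_append_marker (h : IsPretWithMarker φ w) (x : List A) :
    applyM φ x ++ w = w ++ (applyM φ x.reverse).reverse := by
  induction x with
  | nil => simp
  | cons c x ih =>
    simp only [applyM_cons, List.reverse_cons, applyM_append, List.append_assoc, ih]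
    simp [← List.append_assoc, h.append_marker c]

theorem eq_nil_or_eq_nil_of_append_marker_eq (h : IsPretWithMarker φ w) {c : A}
    {p s : List A} (hc : φ c ++ w = p ++ w ++ s) : p = [] ∨ s = [] := by
  have hlen := congrArg List.length hc
  simp only [List.length_append] at hlen
  have hmem : p.length ∈ occs w (φ c ++ w) := by
    rw [hc]
    simp [occs]
  rw [(h.2.2 c).2.1] at hmem
  rcases Finset.mem_insert.mp hmem with h0 | hend
  · exact Or.inl (List.length_eq_zero_iff.mp h0)
  · exact Or.inr (List.length_eq_zero_iff.mp (by simp only [Finset.mem_singleton] at hend; omega))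

theorem exists_applyM_eq_of_append_marker_eq (h : IsPretWithMarker φ w) {x p s : List A}
    (hx : applyM φ x ++ w = p ++ w ++ s) : ∃ x₁ x₂, x = x₁ ++ x₂ ∧ applyM φ x₁ = p := by
  induction x generalizing p with
  | nil =>
    have hlen := congrArg List.length hx
    simp only [applyM_nil, List.nil_append, List.length_append] at hlen
    exact ⟨[], [], rfl, (List.length_eq_zero_iff.mp (by omega)).symm⟩
  | cons c x ih =>
    rw [applyM_cons, List.append_assoc, List.append_assoc] at hx
    rcases List.append_eq_append_iff.mp hx with ⟨q, rfl, hq⟩ | ⟨q, hcq, hq⟩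
    · obtain ⟨x₁, x₂, rfl, hx₁⟩ := ih (by rw [List.append_assoc]; exact hq)
      exact ⟨c :: x₁, x₂, rfl, by rw [applyM_cons, hx₁]⟩
    · have hw : w <+: q ++ w := by
        refine List.prefix_of_prefix_length_le (l₃ := w ++ s) (List.prefix_append _ _) ?_
          (by simp)
        rw [hq, h.applyM_append_marker, ← List.append_assoc]
        exact List.prefix_append _ _
      obtain ⟨r, hr⟩ := hw
      rcases h.eq_nil_or_eq_nil_of_append_marker_eq (c := c) (p := p) (s := r)
        (by rw [hcq, List.append_assoc, ← hr, List.append_assoc]) with rfl | rfl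
      · exact ⟨[], c :: x, rfl, rfl⟩
      · have hq0 : q = [] := by
          simpa using congrArg List.length hr
        exact ⟨[c], x, rfl, by simp [hcq, hq0]⟩

theorem applyM_append_marker_prefix (h : IsPretWithMarker φ w) (x : List A) {y : List A}
    (hy : w.length ≤ y.length) : applyM φ x ++ w <+: applyM φ (x ++ y) := by
  refine List.prefix_of_prefix_length_le (l₃ := applyM φ (x ++ y) ++ w) ?_
    (List.prefix_append _ _) ?_
  · rw [applyM_append, List.append_assoc, h.applyM_append_marker y, ← List.append_assoc]
    exact List.prefix_append _ _
  · simpa using hy.trans (length_le_length_applyM h.ne_nil y)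

theorem inLang_applyInf_iff (h : IsPretWithMarker φ w) (u : ℕ → A) (x : List A) :
    InLang (applyInf φ u) x ↔ ∃ m, x <:+: applyM φ (factorAt u 0 m) ++ w := by
  rw [_root_.inLang_applyInf_iff h.ne_nil]
  constructor
  · rintro ⟨m, hx⟩
    exact ⟨m, hx.trans (List.prefix_append _ _).isInfix⟩
  · rintro ⟨m, hx⟩
    refine ⟨m + w.length, hx.trans (List.IsPrefix.isInfix ?_)⟩
    rw [factorAt_add, zero_add]
    exact h.applyM_append_marker_prefix _ (by simp)

variable {ρ : A → A}

theorem applyM_cons_append_marker (h : IsPretWithMarker φ w)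
    (hρ : ∀ c, (φ c).getLast? = some (ρ c)) (c : A) (x : List A) :
    ∃ t, applyM φ (c :: x) ++ w = w ++ ρ c :: t := by
  obtain ⟨l, hl⟩ := List.getLast?_eq_some_iff.mp (hρ c)
  refine ⟨l.reverse ++ (applyM φ x.reverse).reverse, ?_⟩
  rw [h.applyM_append_marker, List.reverse_cons, applyM_append]
  simp [applyM, hl]

theorem eq_cons_of_applyM_append_marker_eq (h : IsPretWithMarker φ w)
    (hρ : ∀ c, (φ c).getLast? = some (ρ c)) (hinj : Function.Injective ρ) {x s : List A}
    {b : A} (hx : applyM φ x ++ w = w ++ ρ b :: s) : ∃ x', x = b :: x' := by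
  rcases x with _ | ⟨c, x⟩
  · simpa using congrArg List.length hx
  · obtain ⟨t, ht⟩ := h.applyM_cons_append_marker hρ c x
    rw [ht, List.append_cancel_left_eq, List.cons.injEq] at hx
    exact ⟨x, by rw [hinj hx.1]⟩

theorem infix_iff_infix_applyM_append_marker (h : IsPretWithMarker φ w) (hρ : ∀ c, (φ c).getLast? = some (ρ c))
    (hinj : Function.Injective ρ) (a b : A) (v y : List A) :
    a :: (v ++ [b]) <:+: y ↔ ρ a :: (applyM φ v ++ w ++ [ρ b]) <:+: applyM φ y ++ w := by
  constructor
  · rintro ⟨p, s, rfl⟩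
    obtain ⟨l, hl⟩ := List.getLast?_eq_some_iff.mp (hρ a)
    obtain ⟨t, ht⟩ := h.applyM_cons_append_marker hρ b s
    refine ⟨applyM φ p ++ l, t, ?_⟩
    have hy : p ++ a :: (v ++ [b]) ++ s = p ++ [a] ++ v ++ b :: s := by simp
    rw [hy, applyM_append, List.append_assoc _ (applyM φ (b :: s)), ht]
    simp [hl]
  · rintro ⟨p, s, hps⟩
    obtain ⟨x₁, x₂, rfl, hx₁⟩ := h.exists_applyM_eq_of_append_marker_eq
      (p := p ++ ρ a :: applyM φ v) (s := ρ b :: s) (by rw [← hps]; simp)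
    obtain ⟨y, rfl⟩ := eq_append_cons_of_applyM_eq hρ hinj hx₁
    have hx₂ : applyM φ x₂ ++ w = w ++ ρ b :: s := by
      rw [applyM_append, hx₁] at hps
      simpa using hps.symm
    obtain ⟨x, rfl⟩ := h.eq_cons_of_applyM_append_marker_eq hρ hinj hx₂
    exact ⟨y, x, by simp⟩

end IsPretWithMarker

theorem pret_marked_biextensions_general {A : Type*} [DecidableEq A]
    (φ : A → List A) (w : List A) (ρ : A → A) (h : IsPretWithMarker φ w)
    (hρ : ∀ c : A, (φ c).getLast? = some (ρ c))
    (hinj : Function.Injective ρ)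
    (u : ℕ → A) (a b : A) (v : List A) :
    InLang u (a :: (v ++ [b])) ↔
      InLang (applyInf φ u) (ρ a :: (applyM φ v ++ w ++ [ρ b])) := by
  rw [inLang_iff_exists_infix_factorAt, h.inLang_applyInf_iff]
  exact exists_congr fun n => h.infix_iff_infix_applyM_append_marker hρ hinj a b v (factorAt u 0 n)

/-- Let `φ ∈ P_ret` be marked with marker `w`, equal to its rightmost
conjugate, and `ρ` the (injective) last-letter map. Then `a v b` is a factor of `u`
iff `ρ(a) φ(v) w ρ(b)` is a factor of `φ(u)`. -/
theorem pret_marked_biextensions {A : Type*} [Fintype A] [DecidableEq A]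
    (φ : A → List A) (w : List A) (ρ : A → A) (h : IsPretWithMarker φ w)
    (hρ : ∀ c : A, (φ c).getLast? = some (ρ c))
    (hne : ∃ c d : A, ρ c ≠ ρ d)
    (hinj : Function.Injective ρ)
    (u : ℕ → A) (a b : A) (v : List A) :
    InLang u (a :: (v ++ [b])) ↔
      InLang (applyInf φ u) (ρ a :: (applyM φ v ++ w ++ [ρ b])) :=
  pret_marked_biextensions_general φ w ρ h hρ hinj u a b v
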